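/- Let ρ be a nondegenerate (not a point mass) probability measure on ℝ whose support is bounded below, with a_ρ := inf(supp ρ) ∈ ℝ. Then there is no pair (I, f) where I ⊆ ℝ is an open interval containing a_ρ and f : I → ℝ is real analytic on I with f(z) = G_ρ(z) for all z ∈ I with z < a_ρ. In other words, the restriction of the Stieltjes transform G_ρ to (−∞, a_ρ) admits no real analytic continuation to any open interval containing a_ρ. -/

import Mathlib

open MeasureTheory Filter Set

noncomputable section

/-- The topological support of a Borel measure on `ℝ`. -/
def msupp (μ : Measure ℝ) : Set ℝ := {x : ℝ | ∀ U ∈ nhds x, μ U ≠ 0}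

/-- Compact support: some compact set has full measure. -/
def HasCompactSupp (μ : Measure ℝ) : Prop := ∃ K : Set ℝ, IsCompact K ∧ μ K = 1

/-- `a_μ`, the infimum of the support. -/
def aInf (μ : Measure ℝ) : ℝ := sInf (msupp μ)

/-- `b_μ`, the supremum of the support. -/
def bSup (μ : Measure ℝ) : ℝ := sSup (msupp μ)

/-- The (real) Stieltjes transform `G_μ(z) = ∫ (λ - z)⁻¹ dμ(λ)`. -/
def Gst (μ : Measure ℝ) (z : ℝ) : ℝ := ∫ l, (l - z)⁻¹ ∂μ

/-- `G_μ(a_μ) = lim_{z ↑ a_μ} G_μ(z) ∈ (0,∞]`, as the supremum (in `EReal`) of the values of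
`G_μ` on `(-∞, a_μ)` (the two agree since `G_μ` is increasing there). -/
def GaSup (μ : Measure ℝ) : EReal :=
  sSup ((fun z => ((Gst μ z : ℝ) : EReal)) '' Set.Iio (aInf μ))

/-- `G_μ(b_μ) = lim_{z ↓ b_μ} G_μ(z) ∈ [-∞,0)`, as the infimum (in `EReal`) of the values of
`G_μ` on `(b_μ, ∞)` (the two agree since `G_μ` is increasing there). -/
def GbInf (μ : Measure ℝ) : EReal :=
  sInf ((fun z => ((Gst μ z : ℝ) : EReal)) '' Set.Ioi (bSup μ))

/-- The interval `D̂_μ = (-G_μ(a_μ), -G_μ(b_μ)) ⊆ ℝ`. -/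
def Dhat (μ : Measure ℝ) : Set ℝ :=
  {u : ℝ | -(GaSup μ) < (u : EReal) ∧ (u : EReal) < -(GbInf μ)}

/-- The inverse `G_μ^⟨-1⟩` of the restriction of `G_μ` to `ℝ ∖ [a_μ, b_μ]`. -/
def Ginv (μ : Measure ℝ) (g : ℝ) : ℝ :=
  Function.invFunOn (Gst μ) (Set.Iio (aInf μ) ∪ Set.Ioi (bSup μ)) g

/-- The real `R`-transform `R̂_μ(u) = G_μ^⟨-1⟩(-u) - u⁻¹`, meaningful for `u ∈ D̂_μ ∖ {0}`. -/
def Rhat (μ : Measure ℝ) (u : ℝ) : ℝ := Ginv μ (-u) - u⁻¹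

/-- `ρ` is a free additive convolution of `μ` and `ν`. -/
def IsFreeAdd (μ ν ρ : Measure ℝ) : Prop :=
  IsProbabilityMeasure ρ ∧ HasCompactSupp ρ ∧
  ∃ ε > (0 : ℝ), ∀ u : ℝ, u ∈ Set.Ioo (-ε) ε → u ≠ 0 →
    u ∈ Dhat ρ ∧ u ∈ Dhat μ ∧ u ∈ Dhat ν ∧ Rhat ρ u = Rhat μ u + Rhat ν u

/-- `μ` is nondegenerate: not a point mass. -/
def Nondeg (μ : Measure ℝ) : Prop := ¬ ∃ c : ℝ, μ = Measure.dirac c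

/-- The logarithmic potential `U_ρ(z) = ∫ log |z - λ| dρ(λ)`. -/
def Upot (ρ : Measure ℝ) (z : ℝ) : ℝ := ∫ l, Real.log |z - l| ∂ρ

/-- `E_{μ,ν,z}(g) = ∫₀^g s R̂_μ'(-s) ds + ∫ log (λ - z + R̂_μ(-g)) dν(λ)`. -/
def Efun (μ ν : Measure ℝ) (z : ℝ) (g : ℝ) : ℝ :=
  (∫ s in (0:ℝ)..g, s * deriv (Rhat μ) (-s)) + ∫ l, Real.log (l - z + Rhat μ (-g)) ∂ν

/-- The domain `Ê_{μ,ν,z}` of `E_{μ,ν,z}`. -/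
def Ehat (μ ν : Measure ℝ) (z : ℝ) : Set ℝ :=
  {g : ℝ | -g ∈ Dhat μ ∧ g ≠ 0 ∧ z - Rhat μ (-g) < aInf ν}

/-- `F̂_{μ,ν}(h) = R̂_μ(-G_ν(h)) + h`. -/
def Fhat (μ ν : Measure ℝ) (h : ℝ) : ℝ := Rhat μ (-(Gst ν h)) + h

/-- The domain of `F̂_{μ,ν}`. -/
def FhatDom (μ ν : Measure ℝ) : Set ℝ := {h : ℝ | h < aInf ν ∧ -(Gst ν h) ∈ Dhat μ}

/-- `Ĥ_{μ,ν}`: points of the domain to the left of which `F̂_{μ,ν}'` is positive. -/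
def Hhat (μ ν : Measure ℝ) : Set ℝ :=
  {h : ℝ | h ∈ FhatDom μ ν ∧ ∀ t ∈ FhatDom μ ν, t < h → 0 < deriv (Fhat μ ν) t}

/-- `h*_{μ,ν} = sup Ĥ_{μ,ν}`. -/
def hstar (μ ν : Measure ℝ) : ℝ := sSup (Hhat μ ν)

end

/-! If `f` is analytic at `a` and equals `G_ρ` on `(a - δ, a)`, differentiating under the integral
gives `f⁽ⁿ⁾(z) = n! ∫ (λ - z)⁻⁽ⁿ⁺¹⁾ dρ(λ)` there, and letting `z ↑ a` yields
`f⁽ⁿ⁾(a) ≥ n! r⁻⁽ⁿ⁺¹⁾ ρ([a, a + r])` for every `r > 0`. So the Taylor terms `f⁽ⁿ⁾(a) rⁿ / n!`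
stay above `ρ([a, a + r]) / r`, which is positive because `a` lies in the support, whereas they
tend to zero for small `r`. -/

open Topology
open scoped Nat

theorem msupp_eq_support (μ : Measure ℝ) : msupp μ = μ.support := by
  ext x
  simp only [msupp, Measure.mem_support_iff_forall, pos_iff_ne_zero]
  rfl

section LeftEdgeOfSupport

variable {μ : Measure ℝ}

theorem csInf_support_mem (hμ : μ ≠ 0) (hbdd : BddBelow μ.support) :
    sInf μ.support ∈ μ.support :=
  Measure.isClosed_support.csInf_mem (Measure.nonempty_support hμ) hbdd

theorem ae_csInf_support_le (hbdd : BddBelow μ.support) : ∀ᵐ l ∂μ, sInf μ.support ≤ l :=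
  measure_mono_null (fun _ hl hls => hl (csInf_le hbdd hls)) Measure.measure_compl_support

theorem measure_Icc_pos_of_mem_support {a r : ℝ} (ha : a ∈ μ.support)
    (hμa : ∀ᵐ l ∂μ, a ≤ l) (hr : 0 < r) : 0 < μ (Icc a (a + r)) := by
  have hIio : μ (Iio a) = 0 := measure_mono_null (fun _ hl => not_le.2 hl) (ae_iff.1 hμa)
  calc 0 < μ (Ioo (a - 1) (a + r)) :=
        (Measure.mem_support_iff_forall a).1 ha _ (Ioo_mem_nhds (by linarith) (by linarith))
    _ = μ (Ioo (a - 1) (a + r) \ Iio a) := (measure_sdiff_null hIio).symm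
    _ ≤ μ (Icc a (a + r)) := measure_mono fun l ⟨hl, hla⟩ => ⟨not_lt.1 hla, hl.2.le⟩

end LeftEdgeOfSupport

theorem AnalyticAt.exists_pos_tendsto_taylor_term {F : Type*} [NormedAddCommGroup F]
    [NormedSpace ℝ F] [CompleteSpace F] {f : ℝ → F} {x : ℝ} (hf : AnalyticAt ℝ f x) :
    ∃ r : ℝ, 0 < r ∧ Tendsto (fun n => (r ^ n / n !) • iteratedDeriv n f x) atTop (𝓝 0) := by
  obtain ⟨p, R, hp⟩ := hf
  obtain ⟨r, hr0, hrR⟩ := ENNReal.lt_iff_exists_nnreal_btwn.1 hp.r_pos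
  refine ⟨r, by exact_mod_cast hr0, ?_⟩
  have hsum := hp.hasSum_iteratedFDeriv (y := (r : ℝ)) (by simpa using hrR)
  convert hsum.summable.tendsto_atTop_zero using 2 with n
  rw [iteratedFDeriv_apply_eq_iteratedDeriv_mul_prod, smul_smul]
  simp [div_eq_inv_mul]

section StieltjesDerivatives

variable {μ : Measure ℝ} [IsFiniteMeasure μ] {a : ℝ}

theorem inv_sub_pow_le_inv_sub_pow {c l x : ℝ} (hca : c < a) (hal : a ≤ l) (hxc : x ≤ c)
    (k : ℕ) :
    ((l - x)⁻¹) ^ k ≤ ((a - c)⁻¹) ^ k := by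
  have : 0 < a - c := sub_pos.2 hca
  have : 0 < l - x := by linarith
  gcongr

theorem integrable_inv_sub_pow (hμa : ∀ᵐ l ∂μ, a ≤ l) {z : ℝ} (hz : z < a) (k : ℕ) :
    Integrable (fun l => ((l - z)⁻¹) ^ k) μ := by
  refine (integrable_const (((a - z)⁻¹) ^ k)).mono' (by fun_prop) ?_
  filter_upwards [hμa] with l hl
  rw [Real.norm_eq_abs, abs_of_nonneg (pow_nonneg (inv_nonneg.2 (by linarith)) k)]
  exact inv_sub_pow_le_inv_sub_pow hz hl le_rfl k

theorem hasDerivAt_inv_sub_pow {l z : ℝ} (hlz : l ≠ z) (k : ℕ) :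
    HasDerivAt (fun x => ((l - x)⁻¹) ^ (k + 1)) ((k + 1) * ((l - z)⁻¹) ^ (k + 2)) z := by
  have hinv := ((hasDerivAt_id z).const_sub l).fun_inv (sub_ne_zero.2 hlz)
  refine (hinv.fun_pow (k + 1)).congr_deriv ?_
  simp only [id, neg_neg, one_div, Nat.add_sub_cancel, ← inv_pow]
  push_cast
  ring

theorem hasDerivAt_integral_inv_sub_pow (hμa : ∀ᵐ l ∂μ, a ≤ l) {z : ℝ} (hz : z < a) (k : ℕ) :
    HasDerivAt (fun w => ∫ l, ((l - w)⁻¹) ^ (k + 1) ∂μ)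
      ((k + 1) * ∫ l, ((l - z)⁻¹) ^ (k + 2) ∂μ) z := by
  obtain ⟨c, hzc, hca⟩ := exists_between hz
  rw [← integral_const_mul]
  refine (hasDerivAt_integral_of_dominated_loc_of_deriv_le
    (F := fun w l => ((l - w)⁻¹) ^ (k + 1)) (F' := fun w l => (k + 1) * ((l - w)⁻¹) ^ (k + 2))
    (bound := fun _ => (k + 1) * ((a - c)⁻¹) ^ (k + 2))
    (Iio_mem_nhds hzc) (Eventually.of_forall fun _ => by fun_prop)
    (integrable_inv_sub_pow hμa hz _) (by fun_prop) ?_ (integrable_const _) ?_).2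
  · filter_upwards [hμa] with l hl x hx
    have : 0 < l - x := by linarith [mem_Iio.1 hx]
    rw [Real.norm_eq_abs, abs_of_nonneg (by positivity)]
    exact mul_le_mul_of_nonneg_left (inv_sub_pow_le_inv_sub_pow hca hl hx.le _) (by positivity)
  · filter_upwards [hμa] with l hl x hx
    exact hasDerivAt_inv_sub_pow (by linarith [mem_Iio.1 hx]) k

theorem iteratedDeriv_Gst (hμa : ∀ᵐ l ∂μ, a ≤ l) {z : ℝ} (hz : z < a) (n : ℕ) :
    iteratedDeriv n (Gst μ) z = n ! * ∫ l, ((l - z)⁻¹) ^ (n + 1) ∂μ := by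
  induction n generalizing z with
  | zero => simp [Gst]
  | succ n ih =>
    have hEq : iteratedDeriv n (Gst μ) =ᶠ[𝓝 z] fun w => n ! * ∫ l, ((l - w)⁻¹) ^ (n + 1) ∂μ :=
      eventually_of_mem (Iio_mem_nhds hz) fun w hw => ih hw
    rw [iteratedDeriv_succ, hEq.deriv_eq,
      ((hasDerivAt_integral_inv_sub_pow hμa hz n).const_mul _).deriv, Nat.factorial_succ]
    push_cast
    ring

theorem mul_measureReal_Icc_le_integral_inv_sub_pow (hμa : ∀ᵐ l ∂μ, a ≤ l) {z r : ℝ}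
    (hz : z < a) (k : ℕ) :
    ((a + r - z)⁻¹) ^ k * μ.real (Icc a (a + r)) ≤ ∫ l, ((l - z)⁻¹) ^ k ∂μ := by
  have hint := integrable_inv_sub_pow hμa hz k
  calc ((a + r - z)⁻¹) ^ k * μ.real (Icc a (a + r))
      ≤ ∫ l in Icc a (a + r), ((l - z)⁻¹) ^ k ∂μ := by
        refine setIntegral_ge_of_const_le_real measurableSet_Icc (measure_ne_top μ _)
          (fun l hl => ?_) hint.integrableOn
        have : 0 < l - z := by linarith [hl.1]
        have : 0 < a + r - z := by linarith [hl.2]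
        gcongr
        linarith [hl.2]
    _ ≤ ∫ l, ((l - z)⁻¹) ^ k ∂μ := by
        refine setIntegral_le_integral hint ?_
        filter_upwards [hμa] with l hl
        have : 0 < l - z := by linarith
        positivity

theorem le_iteratedDeriv_of_eventuallyEq_Gst (hμa : ∀ᵐ l ∂μ, a ≤ l) {f : ℝ → ℝ}
    (hf : AnalyticAt ℝ f a) (hfG : f =ᶠ[𝓝[<] a] Gst μ) {r : ℝ} (hr : 0 < r) (n : ℕ) :
    n ! * ((r⁻¹) ^ (n + 1) * μ.real (Icc a (a + r))) ≤ iteratedDeriv n f a := by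
  have hcont : ContinuousAt (iteratedDeriv n f) a := by
    rw [iteratedDeriv_eq_iterate]
    exact (hf.iterated_deriv n).continuousAt
  have hbound : Tendsto (fun z => n ! * (((a + r - z)⁻¹) ^ (n + 1) * μ.real (Icc a (a + r))))
      (𝓝[<] a) (𝓝 (n ! * ((r⁻¹) ^ (n + 1) * μ.real (Icc a (a + r))))) := by
    have : a + r - a ≠ 0 := by linarith
    have hcont' : ContinuousAt
        (fun z => n ! * (((a + r - z)⁻¹) ^ (n + 1) * μ.real (Icc a (a + r)))) a := by
      fun_prop (disch := assumption)
    simpa using hcont'.tendsto.mono_left nhdsWithin_le_nhds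
  have hloc : ∀ᶠ z in 𝓝[<] a, f =ᶠ[𝓝 z] Gst μ := by
    filter_upwards [eventually_eventually_nhdsWithin.2 hfG, self_mem_nhdsWithin] with z hz hza
    rwa [nhdsWithin_eq_nhds.2 (Iio_mem_nhds hza)] at hz
  refine le_of_tendsto_of_tendsto hbound (hcont.tendsto.mono_left nhdsWithin_le_nhds) ?_
  filter_upwards [hloc, self_mem_nhdsWithin] with z hzf hz
  rw [hzf.iteratedDeriv_eq, iteratedDeriv_Gst hμa hz]
  gcongr
  exact mul_measureReal_Icc_le_integral_inv_sub_pow hμa hz _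

theorem AnalyticAt.not_eventuallyEq_Gst (hμa : ∀ᵐ l ∂μ, a ≤ l) (ha : a ∈ μ.support)
    {f : ℝ → ℝ} (hf : AnalyticAt ℝ f a) : ¬ f =ᶠ[𝓝[<] a] Gst μ := by
  intro hfG
  obtain ⟨r, hr, htend⟩ := hf.exists_pos_tendsto_taylor_term
  set m := μ.real (Icc a (a + r))
  have hm : 0 < m :=
    ENNReal.toReal_pos (measure_Icc_pos_of_mem_support ha hμa hr).ne' (measure_ne_top μ _)
  have : m / r ≤ 0 := by
    refine ge_of_tendsto' htend fun n => ?_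
    calc m / r = r ^ n / n ! * (n ! * ((r⁻¹) ^ (n + 1) * m)) := by
          rw [inv_pow]
          field_simp
          ring
      _ ≤ (r ^ n / n !) • iteratedDeriv n f a := by
          rw [smul_eq_mul]
          gcongr
          exact le_iteratedDeriv_of_eventuallyEq_Gst hμa hf hfG hr n
  linarith [div_pos hm hr]

end StieltjesDerivatives

theorem statement12_general (ρ : MeasureTheory.Measure ℝ) [MeasureTheory.IsProbabilityMeasure ρ]
    (hbb : BddBelow (msupp ρ)) :
    ¬ ∃ (I : Set ℝ) (f : ℝ → ℝ), IsOpen I ∧ I.OrdConnected ∧ aInf ρ ∈ I ∧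
      AnalyticOnNhd ℝ f I ∧ ∀ z ∈ I, z < aInf ρ → f z = Gst ρ z := by
  rintro ⟨I, f, hI, -, haI, hf, hfG⟩
  simp only [aInf, msupp_eq_support] at haI hfG hbb
  refine (hf _ haI).not_eventuallyEq_Gst (ae_csInf_support_le hbb)
    (csInf_support_mem (IsProbabilityMeasure.ne_zero ρ) hbb) ?_
  filter_upwards [nhdsWithin_le_nhds (hI.mem_nhds haI), self_mem_nhdsWithin] with z hzI hz
    using hfG z hzI hz

/-- the Stieltjes transform of a nondegenerate measure whose support is
bounded below admits no real analytic continuation past the left edge of the support. -/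
theorem statement12 (ρ : MeasureTheory.Measure ℝ) [MeasureTheory.IsProbabilityMeasure ρ]
    (hnd : Nondeg ρ) (hbb : BddBelow (msupp ρ)) (hne : (msupp ρ).Nonempty) :
    ¬ ∃ (I : Set ℝ) (f : ℝ → ℝ), IsOpen I ∧ I.OrdConnected ∧ aInf ρ ∈ I ∧
      AnalyticOnNhd ℝ f I ∧ ∀ z ∈ I, z < aInf ρ → f z = Gst ρ z :=
  statement12_general ρ hbb
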